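/- Let V and A be finite sets, v₀ ∈ V, P : V × A × V → ℝ a nonnegative transition kernel, d ≥ 1, and let (p₀, …, p_d) ∈ K, i.e. p_t(v,a) ≥ 0, ∑_a p₀(v,a) = 1 if v = v₀ and 0 otherwise, and ∑_a p_{t+1}(v,a) = ∑_{v',a} p_t(v',a) P(v | v', a) for t < d. Define a time-dependent policy π_t : V × A → ℝ by π_t(v, a) = p_t(v, a)/(∑_{b} p_t(v, b)) whenever ∑_b p_t(v, b) > 0 (and π_t(v, ·) arbitrary otherwise), and define the induced state marginals q_t : V → ℝ recursively by q₀(v) = ∑_a p₀(v, a) and q_{t+1}(v) = ∑_{v' ∈ V, a ∈ A} q_t(v') · π_t(v', a) · P(v | v', a). Then for all t ≤ d and all v ∈ V, q_t(v) = ∑_{a ∈ A} p_t(v, a); that is, the policy π reproduces the prescribed state distributions. -/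
import Mathlib


open Finset

theorem policy_reproduces_marginals {V A : Type*} [Fintype V] [DecidableEq V] [Fintype A]
    (v₀ : V) (P : V → A → V → ℝ) (hP : ∀ v' a v, 0 ≤ P v' a v)
    (d : ℕ) (hd : 1 ≤ d)
    (p : ℕ → V → A → ℝ)
    -- (p₀, …, p_d) ∈ K :
    (hpos : ∀ t ≤ d, ∀ v a, 0 ≤ p t v a)
    (hinit : ∀ v, ∑ a, p 0 v a = if v = v₀ then 1 else 0)
    (hflow : ∀ t < d, ∀ v, ∑ a, p (t + 1) v a = ∑ v', ∑ a, p t v' a * P v' a v)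
    -- the time-dependent policy π, defined wherever the state marginal is positive:
    (π : ℕ → V → A → ℝ)
    (hπ : ∀ t ≤ d, ∀ v, 0 < ∑ b, p t v b →
      ∀ a, π t v a = p t v a / ∑ b, p t v b)
    -- the state marginals induced by π :
    (q : ℕ → V → ℝ)
    (hq0 : ∀ v, q 0 v = ∑ a, p 0 v a)
    (hqrec : ∀ t < d, ∀ v, q (t + 1) v = ∑ v', ∑ a, q t v' * π t v' a * P v' a v) :
    ∀ t ≤ d, ∀ v, q t v = ∑ a, p t v a := by
  intro t
  induction t with
  | zero => intro _ v; exact hq0 v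
  | succ t ih =>
    intro ht v
    have htd : t < d := Nat.lt_of_succ_le ht
    have htd' : t ≤ d := le_of_lt htd
    rw [hqrec t htd v, hflow t htd v]
    apply Finset.sum_congr rfl
    intro v' _
    apply Finset.sum_congr rfl
    intro a _
    have hq := ih htd' v'
    rcases lt_or_eq_of_le (Finset.sum_nonneg fun b _ => hpos t htd' v' b) with hpos' | hzero
    · rw [hq, hπ t htd' v' hpos' a]
      field_simp
    · have hz : ∀ b, p t v' b = 0 := by
        intro b
        have := Finset.sum_eq_zero_iff_of_nonneg (fun b _ => hpos t htd' v' b) |>.mp hzero.symm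
        exact this b (Finset.mem_univ b)
      rw [hq, ← hzero, hz a]
      ring
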